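/- arXiv:1810.09664 — 2 statements merged into one kernel-verified Lean document; each statement's English description precedes it below -/
import Mathlib

section
/- For every dimension n ≥ 1, every real b₁ with n + b₁ > 0, and all positive constants c, b₂ > 0, there is a constant C > 0 such that for all t > 0: ∫_{|ξ| ≤ 1} |ξ|^{b₁} e^{-c |ξ|^{b₂} t} dξ ≤ C (1 + t)^{-(n + b₁)/b₂}. -/
/-!
Since `‖ξ‖ ^ b₂ ≤ 1` on the unit ball, the weight `e^{-c‖ξ‖^{b₂} t}` is at most
`e^c · e^{-c(1+t)‖ξ‖^{b₂}}` there. Enlarging the ball to the whole space, the integral becomes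
a radial integral which polar coordinates and the substitution `r ↦ r^{b₂}` turn into
`Γ((n+b₁)/b₂)/b₂` times `(c(1+t))^{-(n+b₁)/b₂}`, up to the area of the unit sphere.
-/

open MeasureTheory Metric Real Set

lemma exp_neg_mul_mul_le_exp_mul_exp {c u : ℝ} (t : ℝ) (hc : 0 ≤ c) (hu : u ≤ 1) :
    exp (-c * u * t) ≤ exp c * exp (-(c * (1 + t)) * u) := by
  rw [← exp_add]
  exact exp_le_exp.2 (by nlinarith)

lemma pow_pred_smul_rpow_mul {k : ℕ} (hk : 1 ≤ k) {y : ℝ} (hy : 0 < y) (s z : ℝ) :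
    y ^ (k - 1) • (y ^ s * z) = y ^ ((k : ℝ) - 1 + s) * z := by
  rw [smul_eq_mul, ← mul_assoc, ← rpow_natCast, ← rpow_add hy, Nat.cast_sub hk, Nat.cast_one]

section RadialIntegral

variable {E : Type*} [NormedAddCommGroup E] [NormedSpace ℝ E] [MeasurableSpace E] [BorelSpace E]
  [FiniteDimensional ℝ E] [Nontrivial E] (μ : Measure E) [μ.IsAddHaarMeasure]
  {s p a : ℝ}

local notation "d" => Module.finrank ℝ E

lemma integrable_rpow_norm_mul_exp_neg_mul_rpow_norm (hs : 0 < d + s) (hp : 0 < p) (ha : 0 < a) :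
    Integrable (fun x : E ↦ ‖x‖ ^ s * exp (-a * ‖x‖ ^ p)) μ := by
  rw [integrable_fun_norm_addHaar μ (f := fun r ↦ r ^ s * exp (-a * r ^ p))]
  refine (integrableOn_rpow_mul_exp_neg_mul_rpow (s := (d : ℝ) - 1 + s) (by linarith) hp ha)
    |>.congr_fun (fun y hy ↦ (pow_pred_smul_rpow_mul Module.finrank_pos hy _ _).symm)
      measurableSet_Ioi

lemma integral_rpow_norm_mul_exp_neg_mul_rpow_norm (hs : 0 < d + s) (hp : 0 < p) (ha : 0 < a) :
    ∫ x, ‖x‖ ^ s * exp (-a * ‖x‖ ^ p) ∂μ =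
      d * μ.real (ball 0 1) * (1 / p) * Gamma ((d + s) / p) * a ^ (-(d + s) / p) := by
  rw [integral_fun_norm_addHaar μ (fun r ↦ r ^ s * exp (-a * r ^ p)),
    setIntegral_congr_fun measurableSet_Ioi
      (fun y hy ↦ pow_pred_smul_rpow_mul Module.finrank_pos hy s _),
    integral_rpow_mul_exp_neg_mul_rpow hp (by linarith) ha, nsmul_eq_mul, smul_eq_mul,
    show (d : ℝ) - 1 + s + 1 = d + s by ring]
  ring

end RadialIntegral

/-- For every dimension `n ≥ 1`, every real `b₁` with `n + b₁ > 0`, and all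
`c, b₂ > 0`, there is `C > 0` such that for all `t > 0`:
`∫_{|ξ| ≤ 1} |ξ|^{b₁} e^{-c|ξ|^{b₂} t} dξ ≤ C (1+t)^{-(n+b₁)/b₂}`. -/
theorem small_frequency_integral (n : ℕ) (hn : 1 ≤ n) (b₁ : ℝ) (hb₁ : 0 < (n : ℝ) + b₁)
    (c b₂ : ℝ) (hc : 0 < c) (hb₂ : 0 < b₂) :
    ∃ C > (0:ℝ), ∀ t : ℝ, 0 < t →
      (∫ ξ in Metric.closedBall (0 : EuclideanSpace ℝ (Fin n)) 1,
          ‖ξ‖ ^ b₁ * Real.exp (-c * ‖ξ‖ ^ b₂ * t)) ≤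
        C * (1 + t) ^ (-((n : ℝ) + b₁) / b₂) := by
  have : NeZero n := ⟨by omega⟩
  have hdim : (Module.finrank ℝ (EuclideanSpace ℝ (Fin n)) : ℝ) = n := by simp
  have hball : 0 < volume.real (ball (0 : EuclideanSpace ℝ (Fin n)) 1) :=
    ENNReal.toReal_pos (measure_ball_pos _ _ one_pos).ne' measure_ball_lt_top.ne
  have hΓ := Gamma_pos_of_pos (div_pos hb₁ hb₂)
  refine ⟨exp c * (n * volume.real (ball (0 : EuclideanSpace ℝ (Fin n)) 1) * (1 / b₂) *
    Gamma ((n + b₁) / b₂) * c ^ (-(n + b₁) / b₂)), by positivity, fun t ht ↦ ?_⟩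
  have hct : 0 < c * (1 + t) := by positivity
  have hint := integrable_rpow_norm_mul_exp_neg_mul_rpow_norm volume (hdim ▸ hb₁) hb₂ hct
  calc ∫ ξ in closedBall (0 : EuclideanSpace ℝ (Fin n)) 1, ‖ξ‖ ^ b₁ * exp (-c * ‖ξ‖ ^ b₂ * t)
      ≤ ∫ ξ in closedBall (0 : EuclideanSpace ℝ (Fin n)) 1,
          exp c * (‖ξ‖ ^ b₁ * exp (-(c * (1 + t)) * ‖ξ‖ ^ b₂)) := by
        refine setIntegral_mono_on ?_ (hint.const_mul _).integrableOn measurableSet_closedBall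
          fun ξ hξ ↦ ?_
        · have := integrable_rpow_norm_mul_exp_neg_mul_rpow_norm volume (hdim ▸ hb₁) hb₂
            (mul_pos hc ht)
          exact (this.congr (.of_forall fun ξ ↦ by ring_nf)).integrableOn
        · rw [mul_left_comm]
          have hξ_le : ‖ξ‖ ^ b₂ ≤ 1 := rpow_le_one (norm_nonneg _) (by simpa using hξ) hb₂.le
          exact mul_le_mul_of_nonneg_left (exp_neg_mul_mul_le_exp_mul_exp t hc.le hξ_le)
            (by positivity)
    _ ≤ exp c * ∫ ξ : EuclideanSpace ℝ (Fin n), ‖ξ‖ ^ b₁ * exp (-(c * (1 + t)) * ‖ξ‖ ^ b₂) := by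
        rw [integral_const_mul]
        gcongr _ * ?_
        exact setIntegral_le_integral hint (.of_forall fun ξ ↦ by positivity)
    _ = _ := by
        rw [integral_rpow_norm_mul_exp_neg_mul_rpow_norm volume (hdim ▸ hb₁) hb₂ hct, hdim,
          mul_rpow hc.le (by positivity)]
        ring
end

section
/- Let λ₁(ξ), λ₂(ξ) be the roots of λ² + |ξ|^{2σ} λ + |ξ|^{2σ} = 0 with λ₁ ≠ λ₂. There exist c > 0, C > 0 and δ ∈ (0,1) such that for all 0 < |ξ| ≤ δ and all t ≥ 0: |(e^{λ₁(ξ) t} - e^{λ₂(ξ) t})/(λ₁(ξ) - λ₂(ξ))| ≤ C |ξ|^{-σ} e^{-c |ξ|^{2σ} t}. -/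
/-!
For `0 < a < 4` the two roots of `λ² + aλ + a` are complex conjugate with real part `-a/2`, and
their gap satisfies `|λ₁ - λ₂|² = |a² - 4a| = a(4 - a)`. With `a = |ξ|^{2σ} ≤ 1` the numerator
`e^{λ₁t} - e^{λ₂t}` is therefore at most `2e^{-at/2}` and the denominator at least `√a = |ξ|^σ`.
-/

open Complex

section QuadraticRoots

variable {K : Type*} [Field K] {b c x y : K}

theorem add_eq_neg_of_quadratic_roots (hx : x ^ 2 + b * x + c = 0) (hy : y ^ 2 + b * y + c = 0)
    (hxy : x ≠ y) : x + y = -b := by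
  have h : (x - y) * (x + y + b) = 0 := by linear_combination hx - hy
  linear_combination (mul_eq_zero.mp h).resolve_left (sub_ne_zero.mpr hxy)

theorem sub_sq_eq_discrim_of_quadratic_roots (hx : x ^ 2 + b * x + c = 0)
    (hy : y ^ 2 + b * y + c = 0) (hxy : x ≠ y) : (x - y) ^ 2 = discrim 1 b c := by
  have hsum := add_eq_neg_of_quadratic_roots hx hy hxy
  rw [discrim]
  linear_combination 2 * hx + 2 * hy - (x + y + b) * hsum

end QuadraticRoots

theorem Complex.re_eq_zero_of_sq_eq_ofReal_neg {z : ℂ} {r : ℝ} (hr : r < 0) (hz : z ^ 2 = r) :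
    z.re = 0 := by
  have hre : z.re ^ 2 - z.im ^ 2 = r := by simpa [sq] using congrArg Complex.re hz
  have him : z.re * z.im = 0 := by
    have := congrArg Complex.im hz
    simp only [sq, Complex.mul_im, Complex.ofReal_im] at this
    linarith
  refine (mul_eq_zero.mp him).resolve_right fun h => ?_
  nlinarith [sq_nonneg z.re]

section DampedRoots

variable {a : ℝ} {x y : ℂ} (hx : x ^ 2 + a * x + a = 0) (hy : y ^ 2 + a * y + a = 0) (hxy : x ≠ y)
include hx hy hxy

theorem sub_sq_eq_sq_sub_four_mul_of_quadratic_roots :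
    (x - y) ^ 2 = ((a ^ 2 - 4 * a : ℝ) : ℂ) := by
  rw [sub_sq_eq_discrim_of_quadratic_roots hx hy hxy, discrim]
  push_cast
  ring

theorem re_eq_neg_half_of_quadratic_root (ha0 : 0 < a) (ha4 : a < 4) : x.re = -a / 2 := by
  have hgap : (x - y).re = 0 :=
    Complex.re_eq_zero_of_sq_eq_ofReal_neg (by nlinarith)
      (sub_sq_eq_sq_sub_four_mul_of_quadratic_roots hx hy hxy)
  have hsum : (x + y).re = -a := by
    simpa using congrArg Complex.re (add_eq_neg_of_quadratic_roots hx hy hxy)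
  simp only [Complex.sub_re, Complex.add_re] at hgap hsum
  linarith

theorem le_norm_sub_sq_of_quadratic_roots (ha0 : 0 ≤ a) (ha3 : a ≤ 3) : a ≤ ‖x - y‖ ^ 2 := by
  rw [← norm_pow, sub_sq_eq_sq_sub_four_mul_of_quadratic_roots hx hy hxy, Complex.norm_real,
    Real.norm_eq_abs, abs_of_nonpos (by nlinarith)]
  nlinarith

end DampedRoots

theorem norm_exp_sub_exp_div_sub_le {x y : ℂ} {r : ℝ} (hx : x.re = r) (hy : y.re = r) (t : ℝ) :
    ‖(exp (x * t) - exp (y * t)) / (x - y)‖ ≤ 2 * Real.exp (r * t) / ‖x - y‖ := by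
  rw [norm_div]
  gcongr
  calc ‖exp (x * t) - exp (y * t)‖ ≤ ‖exp (x * t)‖ + ‖exp (y * t)‖ := norm_sub_le _ _
    _ = 2 * Real.exp (r * t) := by
      simp only [Complex.norm_exp, Complex.re_mul_ofReal, hx, hy]
      ring

theorem K1_small_freq_estimate_general (n : ℕ) (σ : ℝ) (hσ : 1 ≤ σ) :
    ∃ c > (0:ℝ), ∃ C > (0:ℝ), ∃ δ : ℝ, 0 < δ ∧ δ < 1 ∧
      ∀ ξ : EuclideanSpace ℝ (Fin n), ξ ≠ 0 → ‖ξ‖ ≤ δ →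
        ∀ t : ℝ, 0 ≤ t →
          ∀ lam1 lam2 : ℂ,
            lam1 ^ 2 + ((‖ξ‖ ^ (2 * σ) : ℝ) : ℂ) * lam1 + ((‖ξ‖ ^ (2 * σ) : ℝ) : ℂ) = 0 →
            lam2 ^ 2 + ((‖ξ‖ ^ (2 * σ) : ℝ) : ℂ) * lam2 + ((‖ξ‖ ^ (2 * σ) : ℝ) : ℂ) = 0 →
            lam1 ≠ lam2 →
            ‖(Complex.exp (lam1 * t) - Complex.exp (lam2 * t)) / (lam1 - lam2)‖ ≤
              C * ‖ξ‖ ^ (-σ) * Real.exp (-c * ‖ξ‖ ^ (2 * σ) * t) := by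
  refine ⟨1 / 2, by norm_num, 2, by norm_num, 1 / 2, by norm_num, by norm_num, ?_⟩
  intro ξ hξ hξδ t _ x y hx hy hxy
  have hr : 0 < ‖ξ‖ := norm_pos_iff.mpr hξ
  have ha_sq : ‖ξ‖ ^ (2 * σ) = (‖ξ‖ ^ σ) ^ 2 := by
    rw [mul_comm, Real.rpow_mul hr.le, Real.rpow_two]
  set a := ‖ξ‖ ^ (2 * σ)
  have ha0 : 0 < a := by positivity
  have ha1 : a ≤ 1 := Real.rpow_le_one hr.le (by linarith) (by linarith)
  have hgap : ‖ξ‖ ^ σ ≤ ‖x - y‖ := by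
    rw [← pow_le_pow_iff_left₀ (by positivity) (norm_nonneg _) two_ne_zero, ← ha_sq]
    exact le_norm_sub_sq_of_quadratic_roots hx hy hxy ha0.le (by linarith)
  calc _ ≤ 2 * Real.exp (-a / 2 * t) / ‖x - y‖ :=
        norm_exp_sub_exp_div_sub_le
          (re_eq_neg_half_of_quadratic_root hx hy hxy ha0 (by linarith))
          (re_eq_neg_half_of_quadratic_root hy hx hxy.symm ha0 (by linarith)) t
    _ ≤ 2 * Real.exp (-a / 2 * t) / ‖ξ‖ ^ σ := by gcongr
    _ = _ := by
      rw [Real.rpow_neg hr.le]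
      ring_nf

/-- There exist `c > 0`, `C > 0`, `δ ∈ (0,1)` such that for all `ξ` with
`0 < |ξ| ≤ δ`, all `t ≥ 0`, and `λ₁ ≠ λ₂` the two roots of
`λ² + |ξ|^{2σ} λ + |ξ|^{2σ} = 0`, the fundamental-solution multiplier satisfies
`|(e^{λ₁ t} - e^{λ₂ t})/(λ₁ - λ₂)| ≤ C |ξ|^{-σ} e^{-c|ξ|^{2σ} t}`. -/
theorem K1_small_freq_estimate (n : ℕ) (hn : 1 ≤ n) (σ : ℝ) (hσ : 1 ≤ σ) :
    ∃ c > (0:ℝ), ∃ C > (0:ℝ), ∃ δ : ℝ, 0 < δ ∧ δ < 1 ∧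
      ∀ ξ : EuclideanSpace ℝ (Fin n), ξ ≠ 0 → ‖ξ‖ ≤ δ →
        ∀ t : ℝ, 0 ≤ t →
          ∀ lam1 lam2 : ℂ,
            lam1 ^ 2 + ((‖ξ‖ ^ (2 * σ) : ℝ) : ℂ) * lam1 + ((‖ξ‖ ^ (2 * σ) : ℝ) : ℂ) = 0 →
            lam2 ^ 2 + ((‖ξ‖ ^ (2 * σ) : ℝ) : ℂ) * lam2 + ((‖ξ‖ ^ (2 * σ) : ℝ) : ℂ) = 0 →
            lam1 ≠ lam2 →
            ‖(Complex.exp (lam1 * t) - Complex.exp (lam2 * t)) / (lam1 - lam2)‖ ≤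
              C * ‖ξ‖ ^ (-σ) * Real.exp (-c * ‖ξ‖ ^ (2 * σ) * t) :=
  K1_small_freq_estimate_general n σ hσ
end
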